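/- Similarity-based analogical proportions do not in general satisfy p-commutativity: in the two-element algebra ({a, b}, f) with f(a)=b and f(b)=b, the proportion a : b ≈ b : a fails. -/

import Mathlib

/-- Terms over a language `L` of function symbols with arities `ar`,
with variables indexed by `ℕ`. -/
inductive Term (L : Type) (ar : L → ℕ) : Type
  | var : ℕ → Term L ar
  | app : (f : L) → (Fin (ar f) → Term L ar) → Term L ar

/-- An `L`-algebra. -/
structure Alg (L : Type) (ar : L → ℕ) where
  carrier : Type
  op : (f : L) → (Fin (ar f) → carrier) → carrier

/-- Evaluation of a term in an algebra under an assignment of the variables. -/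
def Term.eval {L : Type} {ar : L → ℕ} (A : Alg L ar) (ρ : ℕ → A.carrier) :
    Term L ar → A.carrier
  | .var n => ρ n
  | .app f ts => A.op f fun i => (ts i).eval A ρ

/-- Homomorphisms of `L`-algebras. -/
def IsHom {L : Type} {ar : L → ℕ} (A B : Alg L ar) (H : A.carrier → B.carrier) : Prop :=
  ∀ (f : L) (as : Fin (ar f) → A.carrier), H (A.op f as) = B.op f (H ∘ as)

/-- Justifications of an arrow `a → b`: pairs of terms `(s, t)` realized under
a common assignment. -/
def Jus {L : Type} {ar : L → ℕ} (A : Alg L ar) (p : A.carrier × A.carrier) :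
    Set (Term L ar × Term L ar) :=
  {st | ∃ ρ : ℕ → A.carrier, st.1.eval A ρ = p.1 ∧ st.2.eval A ρ = p.2}

/-- Trivial justifications in `(A, B)`: those justifying every arrow in `A` and in `B`. -/
def TrivJus {L : Type} {ar : L → ℕ} (A B : Alg L ar) : Set (Term L ar × Term L ar) :=
  {st | (∀ p : A.carrier × A.carrier, st ∈ Jus A p) ∧
        (∀ q : B.carrier × B.carrier, st ∈ Jus B q)}

/-- The arrow relation `(a→b) ≲_{(A,B)} (c→d)`: either all justifications on either side
are trivial, or the common justifications include a non-trivial one and form a maximal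
set among common justification sets with arrows of `B`. -/
def ArrLe {L : Type} {ar : L → ℕ} (A B : Alg L ar)
    (p : A.carrier × A.carrier) (q : B.carrier × B.carrier) : Prop :=
  (Jus A p ∪ Jus B q ⊆ TrivJus A B) ∨
  (TrivJus A B ⊂ Jus A p ∩ Jus B q ∧
    ∀ q' : B.carrier × B.carrier,
      TrivJus A B ⊂ Jus A p ∩ Jus B q → Jus A p ∩ Jus B q ⊆ Jus A p ∩ Jus B q' →
        TrivJus A B ⊂ Jus A p ∩ Jus B q' ∧ Jus A p ∩ Jus B q' ⊆ Jus A p ∩ Jus B q)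

/-- Similarity-based analogical proportion `a : b ≈_{(A,B)} c : d`. -/
def AP {L : Type} {ar : L → ℕ} (A B : Alg L ar) (a b : A.carrier) (c d : B.carrier) : Prop :=
  ArrLe A B (a, b) (c, d) ∧ ArrLe A B (b, a) (d, c) ∧
  ArrLe B A (c, d) (a, b) ∧ ArrLe B A (d, c) (b, a)

/-- Generalizations of an element. -/
def Gen {L : Type} {ar : L → ℕ} (A : Alg L ar) (a : A.carrier) : Set (Term L ar) :=
  {s | ∃ ρ : ℕ → A.carrier, s.eval A ρ = a}

/-- Trivial generalizations in `(A, B)`. -/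
def TrivGen {L : Type} {ar : L → ℕ} (A B : Alg L ar) : Set (Term L ar) :=
  {s | (∀ a : A.carrier, s ∈ Gen A a) ∧ (∀ b : B.carrier, s ∈ Gen B b)}

/-- `a ≲_{(A,B)} b` for elements. -/
def SimLe {L : Type} {ar : L → ℕ} (A B : Alg L ar) (a : A.carrier) (b : B.carrier) : Prop :=
  (Gen A a ∪ Gen B b ⊆ TrivGen A B) ∨
  (TrivGen A B ⊂ Gen A a ∩ Gen B b ∧
    ∀ b' : B.carrier,
      TrivGen A B ⊂ Gen A a ∩ Gen B b → Gen A a ∩ Gen B b ⊆ Gen A a ∩ Gen B b' →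
        TrivGen A B ⊂ Gen A a ∩ Gen B b' ∧ Gen A a ∩ Gen B b' ⊆ Gen A a ∩ Gen B b)

/-- The similarity relation `a ≈_{(A,B)} b`. -/
def Sim {L : Type} {ar : L → ℕ} (A B : Alg L ar) (a : A.carrier) (b : B.carrier) : Prop :=
  SimLe A B a b ∧ SimLe B A b a

/-- The algebra `({a,b}, f)` with `f(a)=b, f(b)=b`, where `a=0, b=1`. -/
abbrev A13 : Alg Unit (fun _ => 1) := ⟨Fin 2, fun _ v => ![1, 1] (v 0)⟩

/-! The justification `(x, f x)` of `a → b` is non-trivial, since it does not justify `a → a`.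
But a common justification `(s, t)` of `a → b` and `b → a` has both `s` and `t` evaluating to `a`,
which is outside the image of `f`, so both are variables, and distinct ones as `a ≠ b`; such a pair
justifies every arrow. Hence `a → b ≲ b → a` fails. -/

variable {L : Type} {ar : L → ℕ}

theorem Term.exists_eq_var_of_forall_op_ne {A : Alg L ar} {ρ : ℕ → A.carrier} {t : Term L ar}
    (h : ∀ f as, A.op f as ≠ t.eval A ρ) : ∃ n, t = .var n := by
  cases t with
  | var n => exact ⟨n, rfl⟩
  | app f ts => exact (h f _ rfl).elim

theorem var_var_mem_trivJus (A B : Alg L ar) {i j : ℕ} (hij : i ≠ j) :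
    ((.var i, .var j) : Term L ar × Term L ar) ∈ TrivJus A B := by
  have mem_jus : ∀ (C : Alg L ar) (p : C.carrier × C.carrier),
      ((.var i, .var j) : Term L ar × Term L ar) ∈ Jus C p := fun C p =>
    ⟨Function.update (fun _ => p.2) i p.1, Function.update_self .., Function.update_of_ne hij.symm ..⟩
  exact ⟨mem_jus A, mem_jus B⟩

theorem not_arrLe_of_inter_subset_trivJus {A B : Alg L ar} {p : A.carrier × A.carrier}
    {q : B.carrier × B.carrier} {st : Term L ar × Term L ar} (hst : st ∈ Jus A p)
    (hst' : st ∉ TrivJus A B) (hsub : Jus A p ∩ Jus B q ⊆ TrivJus A B) : ¬ ArrLe A B p q := by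
  rintro (hall | ⟨hssub, -⟩)
  · exact hst' (hall (Or.inl hst))
  · exact hssub.not_subset hsub

theorem A13.op_eq_one (f : Unit) (v : Fin 1 → Fin 2) : A13.op f v = 1 := by
  change ![1, 1] (v 0) = 1
  generalize v 0 = x
  fin_cases x <;> rfl

theorem A13.var_app_var_mem_jus :
    ((.var 0, .app () fun _ => .var 0) : Term Unit _ × Term Unit _) ∈ Jus A13 (0, 1) :=
  ⟨fun _ => 0, rfl, A13.op_eq_one _ _⟩

theorem A13.var_app_var_notMem_trivJus :
    ((.var 0, .app () fun _ => .var 0) : Term Unit _ × Term Unit _) ∉ TrivJus A13 A13 := by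
  rintro ⟨hA, -⟩
  obtain ⟨ρ, -, happ⟩ := hA (0, 0)
  exact absurd ((A13.op_eq_one _ _).symm.trans happ) (by decide)

theorem A13.exists_eq_var_of_eval_eq_zero {t : Term Unit (fun _ => 1)} {ρ : ℕ → Fin 2}
    (h : t.eval A13 ρ = 0) : ∃ n, t = .var n :=
  Term.exists_eq_var_of_forall_op_ne fun f as => by rw [h, A13.op_eq_one]; decide

theorem A13.jus_inter_jus_swap_subset_trivJus :
    Jus A13 (0, 1) ∩ Jus A13 (1, 0) ⊆ TrivJus A13 A13 := by
  rintro ⟨s, t⟩ ⟨⟨ρ, hs, ht⟩, ⟨ρ', -, ht'⟩⟩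
  obtain ⟨i, rfl⟩ := A13.exists_eq_var_of_eval_eq_zero hs
  obtain ⟨j, rfl⟩ := A13.exists_eq_var_of_eval_eq_zero ht'
  have hij : i ≠ j := by
    rintro rfl
    exact absurd (hs.symm.trans ht) (by decide)
  exact var_var_mem_trivJus A13 A13 hij

/-- p-commutativity fails: `a : b ≈ b : a` fails in this algebra. -/
theorem ap_p_commutativity_fails : ¬ AP A13 A13 (0 : Fin 2) 1 1 0 := fun h =>
  not_arrLe_of_inter_subset_trivJus A13.var_app_var_mem_jus A13.var_app_var_notMem_trivJus
    A13.jus_inter_jus_swap_subset_trivJus h.1
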